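/- arXiv:1805.10925 — 3 statements merged into one kernel-verified Lean document; each statement's English description precedes it below -/
import Mathlib

section
/- Let Φ be a finite collection of convex cones in ℚⁿ and λ, λ₁, λ₂ convex cones such that every ω ∈ Φ contains λ. If the cone generated by λ ∪ λ₁ meets the interior of λ₂ nontrivially and the cone generated by λ ∪ λ₂ meets the interior of λ₁ nontrivially, and each ω ∈ Φ is a convex cone containing any cone whose interior it meets, then {ω ∈ Φ : λ₁ ⊆ ω} = {ω ∈ Φ : λ₂ ⊆ ω}. -/
open Set

variable {R V : Type*} [Zero R] [LE R] [SMul R V] [Add V]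

variable (R) in
/-- For cones `s` and `t`, this is the cone generated by `s ∪ t`. -/
def conicJoin (s t : Set V) : Set V :=
  {z | ∃ x ∈ s, ∃ y ∈ t, ∃ a b : R, 0 ≤ a ∧ 0 ≤ b ∧ z = a • x + b • y}

theorem conicJoin_subset {ω s t : Set V}
    (hω : ∀ x ∈ ω, ∀ y ∈ ω, ∀ a b : R, 0 ≤ a → 0 ≤ b → a • x + b • y ∈ ω)
    (hs : s ⊆ ω) (ht : t ⊆ ω) : conicJoin R s t ⊆ ω := by
  rintro _ ⟨x, hx, y, hy, a, b, ha, hb, rfl⟩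
  exact hω x (hs hx) y (ht hy) a b ha hb

theorem subset_of_conicJoin_meets_interior [TopologicalSpace V] {ω lam lam₁ lam₂ : Set V}
    (hω : ∀ x ∈ ω, ∀ y ∈ ω, ∀ a b : R, 0 ≤ a → 0 ≤ b → a • x + b • y ∈ ω)
    (hlam : lam ⊆ ω) (hmeet : (ω ∩ interior lam₂).Nonempty → lam₂ ⊆ ω)
    (hgen : (conicJoin R lam lam₁ ∩ interior lam₂).Nonempty) (h₁ : lam₁ ⊆ ω) :
    lam₂ ⊆ ω :=
  hmeet <| hgen.mono <| inter_subset_inter_left _ <| conicJoin_subset hω hlam h₁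

theorem stmt_6_general (n : ℕ) (Φ : Set (Set (Fin n → ℚ)))
    (lam lam₁ lam₂ : Set (Fin n → ℚ))
    (hcone : ∀ ω ∈ Φ, ∀ x ∈ ω, ∀ y ∈ ω, ∀ a b : ℚ, 0 ≤ a → 0 ≤ b →
      a • x + b • y ∈ ω)
    (hlam : ∀ ω ∈ Φ, lam ⊆ ω)
    (hmeet₁ : ∀ ω ∈ Φ, (ω ∩ interior lam₁).Nonempty → lam₁ ⊆ ω)
    (hmeet₂ : ∀ ω ∈ Φ, (ω ∩ interior lam₂).Nonempty → lam₂ ⊆ ω)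
    (hgen₁ : ({z | ∃ x ∈ lam, ∃ y ∈ lam₁, ∃ a b : ℚ, 0 ≤ a ∧ 0 ≤ b ∧
        z = a • x + b • y} ∩ interior lam₂).Nonempty)
    (hgen₂ : ({z | ∃ x ∈ lam, ∃ y ∈ lam₂, ∃ a b : ℚ, 0 ≤ a ∧ 0 ≤ b ∧
        z = a • x + b • y} ∩ interior lam₁).Nonempty) :
    {ω | ω ∈ Φ ∧ lam₁ ⊆ ω} = {ω | ω ∈ Φ ∧ lam₂ ⊆ ω} := by
  ext ω
  refine ⟨fun ⟨hω, h₁⟩ => ⟨hω, ?_⟩, fun ⟨hω, h₂⟩ => ⟨hω, ?_⟩⟩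
  · exact subset_of_conicJoin_meets_interior (hcone ω hω) (hlam ω hω) (hmeet₂ ω hω) hgen₁ h₁
  · exact subset_of_conicJoin_meets_interior (hcone ω hω) (hlam ω hω) (hmeet₁ ω hω) hgen₂ h₂

/-- Let `Φ` be a finite collection of convex cones in `ℚⁿ`, each containing a
fixed cone `lam`. Suppose the cone generated by `lam ∪ lam₁` meets the interior
of `lam₂` and the cone generated by `lam ∪ lam₂` meets the interior of `lam₁`,
and each `ω ∈ Φ` contains any of `lam₁, lam₂` whose interior it meets. Then
`{ω ∈ Φ : lam₁ ⊆ ω} = {ω ∈ Φ : lam₂ ⊆ ω}`. -/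
theorem stmt_6 (n : ℕ) (Φ : Set (Set (Fin n → ℚ))) (hfin : Φ.Finite)
    (lam lam₁ lam₂ : Set (Fin n → ℚ))
    (hcone : ∀ ω ∈ Φ, ∀ x ∈ ω, ∀ y ∈ ω, ∀ a b : ℚ, 0 ≤ a → 0 ≤ b →
      a • x + b • y ∈ ω)
    (hlam : ∀ ω ∈ Φ, lam ⊆ ω)
    (hmeet₁ : ∀ ω ∈ Φ, (ω ∩ interior lam₁).Nonempty → lam₁ ⊆ ω)
    (hmeet₂ : ∀ ω ∈ Φ, (ω ∩ interior lam₂).Nonempty → lam₂ ⊆ ω)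
    (hgen₁ : ({z | ∃ x ∈ lam, ∃ y ∈ lam₁, ∃ a b : ℚ, 0 ≤ a ∧ 0 ≤ b ∧
        z = a • x + b • y} ∩ interior lam₂).Nonempty)
    (hgen₂ : ({z | ∃ x ∈ lam, ∃ y ∈ lam₂, ∃ a b : ℚ, 0 ≤ a ∧ 0 ≤ b ∧
        z = a • x + b • y} ∩ interior lam₁).Nonempty) :
    {ω | ω ∈ Φ ∧ lam₁ ⊆ ω} = {ω | ω ∈ Φ ∧ lam₂ ⊆ ω} :=
  stmt_6_general n Φ lam lam₁ lam₂ hcone hlam hmeet₁ hmeet₂ hgen₁ hgen₂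
end

section
/- Let f₁,…,f_r be homogeneous elements of a ℤ²-graded ring with degrees w₁,…,w_r lying in a pointed cone, and let λ be a 2-dimensional subcone. Any monomial f₁^{a₁}···f_r^{a_r} whose degree lies in the relative interior of λ and which involves at least one variable must involve some f_i with w_i ≤ λ or the degree of every involved f_i lies in λ; in particular, if w ∈ λ° satisfies w < w_i for every w_i ∈ λ°, then every monomial of degree in ℤ₊·w involves at least one f_i with w_i ≤ λ. -/
/-- The cross product in `ℚ²`. -/
def cross (x y : ℚ × ℚ) : ℚ := x.1 * y.2 - x.2 * y.1

/-!
If the conclusion failed, every `w_i` that occurs would have `cross w_i u < 0` or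
`cross w_i v < 0`. Written in the basis `u, v`, such a `w_i` either lies in `-λ`, which pointedness
of `C` excludes; or in `λ°`, where `w_c < w_i` is assumed; or strictly after `λ`, where
`cross w_c w_i > 0` is a direct computation. Hence `cross w_c (∑ a_i w_i) > 0`, whereas
`cross w_c (m w_c) = 0`.
-/

def crossₗ : (ℚ × ℚ) →ₗ[ℚ] (ℚ × ℚ) →ₗ[ℚ] ℚ :=
  LinearMap.mk₂ ℚ cross
    (fun x y z => by simp only [cross, Prod.fst_add, Prod.snd_add]; ring)
    (fun c x y => by simp only [cross, Prod.smul_fst, Prod.smul_snd, smul_eq_mul]; ring)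
    (fun x y z => by simp only [cross, Prod.fst_add, Prod.snd_add]; ring)
    (fun c x y => by simp only [cross, Prod.smul_fst, Prod.smul_snd, smul_eq_mul]; ring)

@[simp]
lemma crossₗ_apply (x y : ℚ × ℚ) : crossₗ x y = cross x y := rfl

@[simp]
lemma cross_self_eq_zero (x : ℚ × ℚ) : cross x x = 0 := by
  simp only [cross]; ring

lemma cross_comm (x y : ℚ × ℚ) : cross x y = -cross y x := by
  simp only [cross]; ring

lemma cross_smul_right (x y : ℚ × ℚ) (c : ℚ) : cross x (c • y) = c * cross x y := by
  simp [← crossₗ_apply]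

lemma cross_smul_add_smul_right (x u v : ℚ × ℚ) (α β : ℚ) :
    cross x (α • u + β • v) = α * cross x u + β * cross x v := by
  simp [← crossₗ_apply]

lemma cross_smul_add_smul_left (x u v : ℚ × ℚ) (α β : ℚ) :
    cross (α • u + β • v) x = α * cross u x + β * cross v x := by
  simp [← crossₗ_apply]

lemma cross_sum_smul_right {ι : Type*} (s : Finset ι) (x : ℚ × ℚ) (a : ι → ℚ)
    (w : ι → ℚ × ℚ) : cross x (∑ i ∈ s, a i • w i) = ∑ i ∈ s, a i * cross x (w i) := by
  simp [← crossₗ_apply, map_sum]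

lemma eq_smul_add_smul_of_cross_ne_zero {u v : ℚ × ℚ} (huv : cross u v ≠ 0) (x : ℚ × ℚ) :
    x = (cross x v / cross u v) • u + (cross u x / cross u v) • v := by
  ext
  · simp only [Prod.fst_add, Prod.smul_fst, smul_eq_mul]
    field_simp
    simp only [cross]; ring
  · simp only [Prod.snd_add, Prod.smul_snd, smul_eq_mul]
    field_simp
    simp only [cross]; ring

lemma cross_nonneg_of_mem_cone {x u v : ℚ × ℚ} (hu : 0 ≤ cross x u) (hv : 0 ≤ cross x v)
    {α β : ℚ} (hα : 0 ≤ α) (hβ : 0 ≤ β) : 0 ≤ cross x (α • u + β • v) := by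
  rw [cross_smul_add_smul_right]
  positivity

section PointedCone

variable {C : Set (ℚ × ℚ)}
  (hsmul : ∀ x ∈ C, ∀ q : ℚ, 0 ≤ q → q • x ∈ C)
  (hadd : ∀ x ∈ C, ∀ y ∈ C, x + y ∈ C)
  (hpointed : ∀ x ∈ C, -x ∈ C → x = 0)
  {u v : ℚ × ℚ} (hu : u ∈ C) (hv : v ∈ C) (horient : 0 < cross u v)
include hsmul hadd hpointed hu hv horient

/-- The hypotheses on `x` say that it lies in `-cone(u, v)`. -/
lemma eq_zero_of_cross_nonneg_of_cross_nonpos {x : ℚ × ℚ} (hx : x ∈ C)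
    (hxu : 0 ≤ cross x u) (hxv : cross x v ≤ 0) : x = 0 := by
  refine hpointed x hx ?_
  have hneg : -x = (-cross x v / cross u v) • u + (cross x u / cross u v) • v := by
    conv_lhs => rw [eq_smul_add_smul_of_cross_ne_zero horient.ne' x, cross_comm u x]
    ext <;> simp only [Prod.fst_neg, Prod.snd_neg, Prod.fst_add, Prod.snd_add, Prod.smul_fst,
      Prod.smul_snd, smul_eq_mul] <;> ring
  rw [hneg]
  exact hadd _ (hsmul u hu _ (div_nonneg (by linarith) horient.le)) _
    (hsmul v hv _ (div_nonneg hxu horient.le))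

lemma cross_pos_of_not_le_cone {α β : ℚ} (hα : 0 < α) (hβ : 0 < β)
    {x : ℚ × ℚ} (hx : x ∈ C)
    (hlt : (∃ s t : ℚ, 0 < s ∧ 0 < t ∧ x = s • u + t • v) → 0 < cross (α • u + β • v) x)
    (hnot : ∃ z, (∃ s t : ℚ, 0 ≤ s ∧ 0 ≤ t ∧ z = s • u + t • v) ∧ cross x z < 0) :
    0 < cross (α • u + β • v) x := by
  obtain ⟨_, ⟨s, t, hs, ht, rfl⟩, hxz⟩ := hnot
  rcases le_or_gt 0 (cross x u) with hxu | hxu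
  · have hxv : cross x v < 0 := by
      by_contra! hxv
      exact (cross_nonneg_of_mem_cone hxu hxv hs ht).not_gt hxz
    have hx0 := eq_zero_of_cross_nonneg_of_cross_nonpos hsmul hadd hpointed hu hv horient hx
      hxu hxv.le
    simp [hx0, cross] at hxv
  rcases le_or_gt (cross x v) 0 with hxv | hxv
  · rw [cross_smul_add_smul_left, cross_comm u, cross_comm v]
    nlinarith
  · refine hlt ⟨cross x v / cross u v, cross u x / cross u v, div_pos hxv horient, ?_,
      eq_smul_add_smul_of_cross_ne_zero horient.ne' x⟩
    rw [cross_comm]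
    exact div_pos (by linarith) horient

end PointedCone

/-- Let `w₁,…,w_r` be degrees lying in a pointed convex cone `C ⊆ ℚ²`, and let
`λ = cone(u,v)` be a two-dimensional subcone. If `wc ∈ λ°` satisfies
`wc < w_i` for every `w_i ∈ λ°`, then every monomial (exponent vector
`a : Fin r → ℕ`) of degree a positive multiple of `wc` involves at least one
`f_i` with `w_i ≤ λ`, i.e. `a i ≠ 0` and `cross (w i) z ≥ 0` for all `z ∈ λ`. -/
theorem stmt_9 (r : ℕ) (w : Fin r → ℚ × ℚ) (u v wc : ℚ × ℚ)
    (C : Set (ℚ × ℚ))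
    (hsmul : ∀ x ∈ C, ∀ q : ℚ, 0 ≤ q → q • x ∈ C)
    (hadd : ∀ x ∈ C, ∀ y ∈ C, x + y ∈ C)
    (hpointed : ∀ x ∈ C, -x ∈ C → x = 0)
    (hw : ∀ i, w i ∈ C) (hu : u ∈ C) (hv : v ∈ C)
    (horient : 0 < cross u v)
    (hwc : ∃ α β : ℚ, 0 < α ∧ 0 < β ∧ wc = α • u + β • v)
    (hlt : ∀ i, (∃ α β : ℚ, 0 < α ∧ 0 < β ∧ w i = α • u + β • v) →
      0 < cross wc (w i)) :
    ∀ (a : Fin r → ℕ) (m : ℕ), 0 < m →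
      (∑ i, (a i : ℚ) • w i = (m : ℚ) • wc) →
      ∃ i, a i ≠ 0 ∧
        ∀ z, (∃ α β : ℚ, 0 ≤ α ∧ 0 ≤ β ∧ z = α • u + β • v) →
          0 ≤ cross (w i) z := by
  intro a m hm hsum
  by_contra! hcon
  obtain ⟨α, β, hα, hβ, rfl⟩ := hwc
  have hpos : ∀ i, a i ≠ 0 → 0 < cross (α • u + β • v) (w i) := fun i hi =>
    cross_pos_of_not_le_cone hsmul hadd hpointed hu hv horient hα hβ (hw i) (hlt i) (hcon i hi)
  have hwc : α • u + β • v ≠ 0 := by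
    intro h0
    have h := cross_smul_add_smul_left v u v α β
    rw [h0, cross_self_eq_zero, mul_zero, add_zero] at h
    exact (mul_pos hα horient).ne (by simpa [cross] using h)
  obtain ⟨j, hj⟩ : ∃ j, a j ≠ 0 := by
    by_contra! h0
    have hzero : (m : ℚ) • (α • u + β • v) = 0 := by simp [← hsum, h0]
    exact hwc ((smul_eq_zero.1 hzero).resolve_left (by positivity))
  have hsum_pos : 0 < ∑ i, (a i : ℚ) * cross (α • u + β • v) (w i) := by
    refine Finset.sum_pos' (fun i _ => ?_) ⟨j, Finset.mem_univ j, ?_⟩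
    · rcases eq_or_ne (a i) 0 with hi | hi
      · simp [hi]
      · exact (mul_pos (by positivity) (hpos i hi)).le
    · exact mul_pos (by positivity) (hpos j hj)
  rw [← cross_sum_smul_right, hsum, cross_smul_right, cross_self_eq_zero, mul_zero] at hsum_pos
  exact hsum_pos.false
end

section
/- Let Q be a 2×r integer matrix whose columns w₁,…,w_r span ℚ² and lie in a pointed cone, and suppose every pair of columns spans an orbit cone (toric case). Then for any two distinct maximal chambers λ′ ≤ λ′′ (2-dimensional cones spanned by consecutive columns) and any chamber λ_A, one of the following holds: there exist columns w_i, w_j with cone(w_i,w_j) ⊇ λ_A ∪ λ′ but cone(w_i,w_j) ⊉ λ_A ∪ λ′′, or there exist columns with cone(w_i,w_j) ⊇ λ_A ∪ λ′′ but ⊉ λ_A ∪ λ′. -/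
/-- The convex cone spanned by two vectors in `ℚ²`. -/
def cone2 (u v : ℚ × ℚ) : Set (ℚ × ℚ) :=
  {x | ∃ a b : ℚ, 0 ≤ a ∧ 0 ≤ b ∧ x = a • u + b • v}

lemma cross_neg_iff {x y : ℚ × ℚ} : cross x y < 0 ↔ 0 < cross y x := by
  simp only [cross]; constructor <;> intro h <;> linarith

lemma cross_nonpos_iff {x y : ℚ × ℚ} : cross x y ≤ 0 ↔ 0 ≤ cross y x := by
  simp only [cross]; constructor <;> intro h <;> linarith

lemma cross_smul_add_cross_smul (a b c : ℚ × ℚ) :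
    cross b c • a + cross a b • c = cross a c • b := by
  ext <;> simp only [cross, Prod.fst_add, Prod.snd_add, Prod.smul_fst, Prod.smul_snd,
    smul_eq_mul] <;> ring

section SalientCone

variable {K : PointedCone ℚ (ℚ × ℚ)} {a b c : ℚ × ℚ}

theorem cross_pos_of_nonneg_of_pos (hK : (K : ConvexCone ℚ (ℚ × ℚ)).Salient)
    (ha : a ∈ K) (hb : b ∈ K) (hc : c ∈ K) (ha0 : a ≠ 0)
    (hab : 0 ≤ cross a b) (hbc : 0 < cross b c) : 0 < cross a c := by
  by_contra! hac
  have hneg : -(cross b c • a) = cross a b • c + (-cross a c) • b := by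
    rw [neg_smul, ← cross_smul_add_cross_smul a b c]; abel
  exact hK _ (K.smul_mem hbc.le ha) (smul_ne_zero hbc.ne' ha0)
    (hneg ▸ K.add_mem (K.smul_mem hab hc) (K.smul_mem (neg_nonneg.2 hac) hb))

theorem cross_pos_of_pos_of_nonneg (hK : (K : ConvexCone ℚ (ℚ × ℚ)).Salient)
    (ha : a ∈ K) (hb : b ∈ K) (hc : c ∈ K) (hc0 : c ≠ 0)
    (hab : 0 < cross a b) (hbc : 0 ≤ cross b c) : 0 < cross a c := by
  by_contra! hac
  have hneg : -(cross a b • c) = cross b c • a + (-cross a c) • b := by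
    rw [neg_smul, ← cross_smul_add_cross_smul a b c]; abel
  exact hK _ (K.smul_mem hab.le hc) (smul_ne_zero hab.ne' hc0)
    (hneg ▸ K.add_mem (K.smul_mem hbc ha) (K.smul_mem (neg_nonneg.2 hac) hb))

end SalientCone

section Cone2

variable {a b c d e f p q x : ℚ × ℚ}

lemma left_mem_cone2 (p q : ℚ × ℚ) : p ∈ cone2 p q :=
  ⟨1, 0, zero_le_one, le_rfl, by simp⟩

lemma right_mem_cone2 (p q : ℚ × ℚ) : q ∈ cone2 p q :=
  ⟨0, 1, le_rfl, zero_le_one, by simp⟩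

lemma mem_cone2_iff (hpq : 0 < cross p q) :
    x ∈ cone2 p q ↔ 0 ≤ cross p x ∧ 0 ≤ cross x q := by
  constructor
  · rintro ⟨s, t, hs, ht, rfl⟩
    simp only [cross, Prod.fst_add, Prod.snd_add, Prod.smul_fst, Prod.smul_snd,
      smul_eq_mul] at hpq ⊢
    constructor <;> nlinarith
  · rintro ⟨hpx, hxq⟩
    refine ⟨cross x q / cross p q, cross p x / cross p q,
      div_nonneg hxq hpq.le, div_nonneg hpx hpq.le, ?_⟩
    have hD : cross p q ≠ 0 := hpq.ne'
    ext <;> simp only [Prod.fst_add, Prod.snd_add, Prod.smul_fst, Prod.smul_snd,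
      smul_eq_mul] <;> field_simp <;> simp only [cross] <;> ring

lemma cone2_subset_iff : cone2 a b ⊆ cone2 p q ↔ a ∈ cone2 p q ∧ b ∈ cone2 p q := by
  refine ⟨fun h => ⟨h (left_mem_cone2 a b), h (right_mem_cone2 a b)⟩, ?_⟩
  rintro ⟨⟨s, t, hs, ht, rfl⟩, ⟨s', t', hs', ht', rfl⟩⟩ x ⟨m, n, hm, hn, rfl⟩
  exact ⟨m * s + n * s', m * t + n * t', by positivity, by positivity, by module⟩

lemma notMem_cone2_of_cross_pos_left (hpq : 0 < cross p q) (hx : 0 < cross x p) :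
    x ∉ cone2 p q := fun h =>
  (cross_neg_iff.2 hx).not_ge ((mem_cone2_iff hpq).1 h).1

lemma notMem_cone2_of_cross_pos_right (hpq : 0 < cross p q) (hx : 0 < cross q x) :
    x ∉ cone2 p q := fun h =>
  (cross_neg_iff.2 hx).not_ge ((mem_cone2_iff hpq).1 h).2

lemma union_cone2_subset_and_not_subset (ha : a ∈ cone2 p q) (hb : b ∈ cone2 p q)
    (hc : c ∈ cone2 p q) (hd : d ∈ cone2 p q) (hef : e ∉ cone2 p q ∨ f ∉ cone2 p q) :
    cone2 a b ∪ cone2 c d ⊆ cone2 p q ∧ ¬cone2 a b ∪ cone2 e f ⊆ cone2 p q := by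
  refine ⟨Set.union_subset (cone2_subset_iff.2 ⟨ha, hb⟩) (cone2_subset_iff.2 ⟨hc, hd⟩), ?_⟩
  rw [Set.union_subset_iff, cone2_subset_iff, cone2_subset_iff]
  tauto

end Cone2

section Columns

variable {ι : Type*} {K : PointedCone ℚ (ℚ × ℚ)} {w : ι → ℚ × ℚ} {i₁ i₂ i₃ i₄ i₅ i₆ : ι}

theorem separates_of_cross_nonneg_left (hK : (K : ConvexCone ℚ (ℚ × ℚ)).Salient)
    (hwK : ∀ i, w i ∈ K) (hw0 : ∀ i, w i ≠ 0)
    (h₁ : 0 < cross (w i₁) (w i₂)) (h₃ : 0 < cross (w i₅) (w i₆))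
    (h61 : 0 ≤ cross (w i₆) (w i₁)) (h24 : 0 < cross (w i₂) (w i₄)) :
    cone2 (w i₅) (w i₆) ∪ cone2 (w i₁) (w i₂) ⊆ cone2 (w i₅) (w i₂) ∧
      ¬cone2 (w i₅) (w i₆) ∪ cone2 (w i₃) (w i₄) ⊆ cone2 (w i₅) (w i₂) := by
  have h51 := cross_pos_of_pos_of_nonneg hK (hwK _) (hwK _) (hwK _) (hw0 _) h₃ h61
  have h52 := cross_pos_of_pos_of_nonneg hK (hwK _) (hwK _) (hwK _) (hw0 _) h51 h₁.le
  have h62 := cross_pos_of_nonneg_of_pos hK (hwK _) (hwK _) (hwK _) (hw0 _) h61 h₁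
  exact union_cone2_subset_and_not_subset (left_mem_cone2 _ _)
    ((mem_cone2_iff h52).2 ⟨h₃.le, h62.le⟩) ((mem_cone2_iff h52).2 ⟨h51.le, h₁.le⟩)
    (right_mem_cone2 _ _) (Or.inr (notMem_cone2_of_cross_pos_right h52 h24))

theorem separates_of_cross_nonneg_right (hK : (K : ConvexCone ℚ (ℚ × ℚ)).Salient)
    (hwK : ∀ i, w i ∈ K) (hw0 : ∀ i, w i ≠ 0)
    (h₂ : 0 < cross (w i₃) (w i₄)) (h₃ : 0 < cross (w i₅) (w i₆))
    (h45 : 0 ≤ cross (w i₄) (w i₅)) (h13 : 0 < cross (w i₁) (w i₃)) :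
    cone2 (w i₅) (w i₆) ∪ cone2 (w i₃) (w i₄) ⊆ cone2 (w i₃) (w i₆) ∧
      ¬cone2 (w i₅) (w i₆) ∪ cone2 (w i₁) (w i₂) ⊆ cone2 (w i₃) (w i₆) := by
  have h35 := cross_pos_of_pos_of_nonneg hK (hwK _) (hwK _) (hwK _) (hw0 _) h₂ h45
  have h36 := cross_pos_of_pos_of_nonneg hK (hwK _) (hwK _) (hwK _) (hw0 _) h35 h₃.le
  have h46 := cross_pos_of_nonneg_of_pos hK (hwK _) (hwK _) (hwK _) (hw0 _) h45 h₃
  exact union_cone2_subset_and_not_subset ((mem_cone2_iff h36).2 ⟨h35.le, h₃.le⟩)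
    (right_mem_cone2 _ _) (left_mem_cone2 _ _) ((mem_cone2_iff h36).2 ⟨h₂.le, h46.le⟩)
    (Or.inl (notMem_cone2_of_cross_pos_left h36 h13))

theorem separates_of_cross_pos_of_cross_pos (hK : (K : ConvexCone ℚ (ℚ × ℚ)).Salient)
    (hwK : ∀ i, w i ∈ K) (hw0 : ∀ i, w i ≠ 0)
    (h₁ : 0 < cross (w i₁) (w i₂)) (h₂ : 0 < cross (w i₃) (w i₄))
    (h₃ : 0 < cross (w i₅) (w i₆))
    (hc₁ : ∀ k, ¬(0 < cross (w i₁) (w k) ∧ 0 < cross (w k) (w i₂)))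
    (hc₂ : ∀ k, ¬(0 < cross (w i₃) (w k) ∧ 0 < cross (w k) (w i₄)))
    (hc₃ : ∀ k, ¬(0 < cross (w i₅) (w k) ∧ 0 < cross (w k) (w i₆)))
    (h24 : 0 < cross (w i₂) (w i₄)) (h16 : 0 < cross (w i₁) (w i₆)) (h54 : 0 < cross (w i₅) (w i₄)) :
    (∃ p q, cone2 (w i₅) (w i₆) ∪ cone2 (w i₁) (w i₂) ⊆ cone2 (w p) (w q) ∧
        ¬(cone2 (w i₅) (w i₆) ∪ cone2 (w i₃) (w i₄) ⊆ cone2 (w p) (w q))) ∨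
    (∃ p q, cone2 (w i₅) (w i₆) ∪ cone2 (w i₃) (w i₄) ⊆ cone2 (w p) (w q) ∧
        ¬(cone2 (w i₅) (w i₆) ∪ cone2 (w i₁) (w i₂) ⊆ cone2 (w p) (w q))) := by
  have h15 : 0 ≤ cross (w i₁) (w i₅) := not_lt.1 fun h => hc₃ i₁ ⟨cross_neg_iff.1 h, h16⟩
  have h26 : 0 ≤ cross (w i₂) (w i₆) := not_lt.1 fun h => hc₁ i₆ ⟨h16, cross_neg_iff.1 h⟩
  have h53 : 0 ≤ cross (w i₅) (w i₃) := not_lt.1 fun h => hc₂ i₅ ⟨cross_neg_iff.1 h, h54⟩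
  have h64 : 0 ≤ cross (w i₆) (w i₄) := not_lt.1 fun h => hc₃ i₄ ⟨h54, cross_neg_iff.1 h⟩
  rcases h64.lt_or_eq with h64 | h64
  · exact Or.inl ⟨i₁, i₆, union_cone2_subset_and_not_subset
      ((mem_cone2_iff h16).2 ⟨h15, h₃.le⟩) (right_mem_cone2 _ _)
      (left_mem_cone2 _ _) ((mem_cone2_iff h16).2 ⟨h₁.le, h26⟩)
      (Or.inr (notMem_cone2_of_cross_pos_right h16 h64))⟩
  rcases h15.lt_or_eq with h15 | h15
  · exact Or.inr ⟨i₅, i₄, union_cone2_subset_and_not_subset (left_mem_cone2 _ _)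
      ((mem_cone2_iff h54).2 ⟨h₃.le, h64.le⟩) ((mem_cone2_iff h54).2 ⟨h53, h₂.le⟩)
      (right_mem_cone2 _ _) (Or.inl (notMem_cone2_of_cross_pos_left h54 h15))⟩
  have h52 := cross_pos_of_nonneg_of_pos hK (hwK _) (hwK _) (hwK _) (hw0 _)
    (cross_nonpos_iff.1 h15.ge) h₁
  have h26 := cross_pos_of_pos_of_nonneg hK (hwK _) (hwK _) (hwK _) (hw0 _) h24
    (cross_nonpos_iff.1 h64.ge)
  exact (hc₃ i₂ ⟨h52, h26⟩).elim

end Columns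

theorem stmt_17_general (r : ℕ) (w : Fin r → ℚ × ℚ)
    (C : Set (ℚ × ℚ))
    (hsmul : ∀ x ∈ C, ∀ q : ℚ, 0 ≤ q → q • x ∈ C)
    (hadd : ∀ x ∈ C, ∀ y ∈ C, x + y ∈ C)
    (hpointed : ∀ x ∈ C, -x ∈ C → x = 0)
    (hwC : ∀ i, w i ∈ C) (hwne : ∀ i, w i ≠ 0)
    (i₁ i₂ i₃ i₄ i₅ i₆ : Fin r)
    -- the three chambers are two-dimensional (positively oriented pairs):
    (h₁ : 0 < cross (w i₁) (w i₂)) (h₂ : 0 < cross (w i₃) (w i₄))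
    (h₃ : 0 < cross (w i₅) (w i₆))
    -- the spanning pairs are order-consecutive: no column lies strictly inside:
    (hc₁ : ∀ k, ¬(0 < cross (w i₁) (w k) ∧ 0 < cross (w k) (w i₂)))
    (hc₂ : ∀ k, ¬(0 < cross (w i₃) (w k) ∧ 0 < cross (w k) (w i₄)))
    (hc₃ : ∀ k, ¬(0 < cross (w i₅) (w k) ∧ 0 < cross (w k) (w i₆)))
    -- `λ′ ≤ λ″` and the two chambers are distinct:
    (hord : ∀ x ∈ cone2 (w i₁) (w i₂), ∀ y ∈ cone2 (w i₃) (w i₄), 0 ≤ cross x y) :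
    (∃ p q, cone2 (w i₅) (w i₆) ∪ cone2 (w i₁) (w i₂) ⊆ cone2 (w p) (w q) ∧
        ¬(cone2 (w i₅) (w i₆) ∪ cone2 (w i₃) (w i₄) ⊆ cone2 (w p) (w q))) ∨
    (∃ p q, cone2 (w i₅) (w i₆) ∪ cone2 (w i₃) (w i₄) ⊆ cone2 (w p) (w q) ∧
        ¬(cone2 (w i₅) (w i₆) ∪ cone2 (w i₁) (w i₂) ⊆ cone2 (w p) (w q))) := by
  let K : PointedCone ℚ (ℚ × ℚ) :=
    { carrier := C
      add_mem' := fun hx hy => hadd _ hx _ hy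
      zero_mem' := by simpa using hsmul _ (hwC i₁) 0 le_rfl
      smul_mem' := fun c _ hx => hsmul _ hx c c.2 }
  have hK : (K : ConvexCone ℚ (ℚ × ℚ)).Salient := fun x hx hx0 hnx => hx0 (hpointed x hx hnx)
  have h23 : 0 ≤ cross (w i₂) (w i₃) := hord _ (right_mem_cone2 _ _) _ (left_mem_cone2 _ _)
  have h13 := cross_pos_of_pos_of_nonneg hK (hwC _) (hwC _) (hwC _) (hwne _) h₁ h23
  have h24 := cross_pos_of_nonneg_of_pos hK (hwC _) (hwC _) (hwC _) (hwne _) h23 h₂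
  rcases le_or_gt 0 (cross (w i₆) (w i₁)) with h61 | h61
  · exact Or.inl ⟨i₅, i₂, separates_of_cross_nonneg_left hK hwC hwne h₁ h₃ h61 h24⟩
  rcases le_or_gt 0 (cross (w i₄) (w i₅)) with h45 | h45
  · exact Or.inr ⟨i₃, i₆, separates_of_cross_nonneg_right hK hwC hwne h₂ h₃ h45 h13⟩
  exact separates_of_cross_pos_of_cross_pos hK hwC hwne h₁ h₂ h₃ hc₁ hc₂ hc₃ h24
    (cross_neg_iff.1 h61) (cross_neg_iff.1 h45)

/-- Toric case in Picard rank two: the columns `w₁,…,w_r` span `ℚ²` and lie in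
a pointed cone; every pair of columns spans an orbit cone.  Maximal chambers
are two-dimensional cones spanned by order-consecutive columns.  For two
distinct maximal chambers `λ′ = cone(w i₁, w i₂) ≤ λ″ = cone(w i₃, w i₄)` and
any maximal chamber `λ_A = cone(w i₅, w i₆)`, there exist two columns spanning
a cone containing `λ_A ∪ λ′` but not `λ_A ∪ λ″`, or two columns spanning a
cone containing `λ_A ∪ λ″` but not `λ_A ∪ λ′`. -/
theorem stmt_17 (r : ℕ) (w : Fin r → ℚ × ℚ)
    (C : Set (ℚ × ℚ))
    (hsmul : ∀ x ∈ C, ∀ q : ℚ, 0 ≤ q → q • x ∈ C)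
    (hadd : ∀ x ∈ C, ∀ y ∈ C, x + y ∈ C)
    (hpointed : ∀ x ∈ C, -x ∈ C → x = 0)
    (hwC : ∀ i, w i ∈ C) (hwne : ∀ i, w i ≠ 0)
    (hspan : Submodule.span ℚ (Set.range w) = ⊤)
    (i₁ i₂ i₃ i₄ i₅ i₆ : Fin r)
    -- the three chambers are two-dimensional (positively oriented pairs):
    (h₁ : 0 < cross (w i₁) (w i₂)) (h₂ : 0 < cross (w i₃) (w i₄))
    (h₃ : 0 < cross (w i₅) (w i₆))
    -- the spanning pairs are order-consecutive: no column lies strictly inside: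
    (hc₁ : ∀ k, ¬(0 < cross (w i₁) (w k) ∧ 0 < cross (w k) (w i₂)))
    (hc₂ : ∀ k, ¬(0 < cross (w i₃) (w k) ∧ 0 < cross (w k) (w i₄)))
    (hc₃ : ∀ k, ¬(0 < cross (w i₅) (w k) ∧ 0 < cross (w k) (w i₆)))
    -- `λ′ ≤ λ″` and the two chambers are distinct:
    (hord : ∀ x ∈ cone2 (w i₁) (w i₂), ∀ y ∈ cone2 (w i₃) (w i₄), 0 ≤ cross x y)
    (hne : cone2 (w i₁) (w i₂) ≠ cone2 (w i₃) (w i₄)) :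
    (∃ p q, cone2 (w i₅) (w i₆) ∪ cone2 (w i₁) (w i₂) ⊆ cone2 (w p) (w q) ∧
        ¬(cone2 (w i₅) (w i₆) ∪ cone2 (w i₃) (w i₄) ⊆ cone2 (w p) (w q))) ∨
    (∃ p q, cone2 (w i₅) (w i₆) ∪ cone2 (w i₃) (w i₄) ⊆ cone2 (w p) (w q) ∧
        ¬(cone2 (w i₅) (w i₆) ∪ cone2 (w i₁) (w i₂) ⊆ cone2 (w p) (w q))) :=
  stmt_17_general r w C hsmul hadd hpointed hwC hwne i₁ i₂ i₃ i₄ i₅ i₆ h₁ h₂ h₃ hc₁ hc₂ hc₃ hord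
end
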